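/- Let E be a compact Polish space, I ⊆ K(E) a G_δ σ-ideal with property (*) containing only meager sets, and suppose E has only finitely many limit points. Then there exists a compact upward closed set F ⊆ K(E) such that for every nonempty G_δ set G ⊆ E that is everywhere big with respect to I, the set G* is nonmeager in F. -/

import Mathlib

/-!
Let `A` be the set of non-isolated points `x` with `{x} ∉ I`; it is finite, and
`F = {K | A ⊆ K}` is closed, hence compact, and upward closed. Let `G` be everywhere big.
If `G` has an isolated point `x`, then `{x}* ∩ F` is a nonempty open subset of `F` inside `G*`.
Otherwise pick `x ∈ G`: an open set separating `x` from the finitely many other non-isolated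
points meets `G` exactly in `{x}`, so bigness gives `{x} ∉ I`, i.e. `x ∈ A`, and `G* ⊇ F`.
Either way `G*` contains a nonempty open subset of the Baire space `F`.
-/

open TopologicalSpace

variable {E : Type*} [MetricSpace E] [CompactSpace E]

/-- `A* = {K ∈ K(E) : K ∩ A ≠ ∅}`. -/
def star (A : Set E) : Set (NonemptyCompacts E) := {K | ((K : Set E) ∩ A).Nonempty}

/-- `S` is meager relative to the subspace `F` of the hyperspace. -/
def MeagerIn (S F : Set (NonemptyCompacts E)) : Prop :=
  IsMeagre (Subtype.val ⁻¹' S : Set F)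

section

variable {X : Type*} [MetricSpace X]

def EverywhereBig (I : Set (NonemptyCompacts X)) (G : Set X) : Prop :=
  ∀ U : Set X, IsOpen U → (U ∩ G).Nonempty → ¬ ∃ K ∈ I, (K : Set X) = closure (U ∩ G)

def bigLimitPoints (I : Set (NonemptyCompacts X)) : Set X :=
  {x | ¬ IsOpen ({x} : Set X) ∧ {x} ∉ I}

lemma isOpen_star {U : Set X} (hU : IsOpen U) : IsOpen (star U) := by
  rw [isOpen_iff_forall_mem_open]
  rintro K ⟨x, hxK, hxU⟩
  obtain ⟨ε, hε, hball⟩ := Metric.isOpen_iff.1 hU x hxU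
  refine ⟨{L | Metric.infDist x (L : Set X) < ε}, ?_,
    isOpen_lt (Metric.lipschitz_infDist_set x).continuous continuous_const, ?_⟩
  · intro L hL
    obtain ⟨y, hyL, hy⟩ := (Metric.infDist_lt_iff L.nonempty).1 hL
    exact ⟨y, hyL, hball (by rwa [Metric.mem_ball, dist_comm])⟩
  · simpa [Metric.infDist_zero_of_mem hxK] using hε

lemma NonemptyCompacts.isClosed_setOf_mem (a : X) :
    IsClosed {K : NonemptyCompacts X | a ∈ K} := by
  have : {K : NonemptyCompacts X | a ∈ K} =
      (fun K : NonemptyCompacts X => Metric.infDist a (K : Set X)) ⁻¹' {0} := by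
    ext K
    exact K.isCompact.isClosed.mem_iff_infDist_zero K.nonempty
  rw [this]
  exact isClosed_singleton.preimage (Metric.lipschitz_infDist_set a).continuous

lemma NonemptyCompacts.isClosed_setOf_superset (A : Set X) :
    IsClosed {K : NonemptyCompacts X | A ⊆ K} := by
  simp only [Set.subset_def, Set.ofPred_forall]
  exact isClosed_biInter fun a _ => isClosed_setOf_mem a

lemma not_meagerIn_of_isOpen {S F U : Set (NonemptyCompacts X)} [BaireSpace F] (hU : IsOpen U)
    (hne : (U ∩ F).Nonempty) (hsub : U ∩ F ⊆ S) : ¬ MeagerIn S F := by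
  obtain ⟨K, hKU, hKF⟩ := hne
  intro hS
  refine not_isMeagre_of_isOpen (hU.preimage continuous_subtype_val) ⟨⟨K, hKF⟩, hKU⟩
    (hS.mono fun L hL => hsub ⟨hL, L.2⟩)

lemma mem_bigLimitPoints_of_everywhereBig {I : Set (NonemptyCompacts X)} {G : Set X}
    (hlim : {x : X | ¬ IsOpen ({x} : Set X)}.Finite) (hbig : EverywhereBig I G)
    (hG : ∀ y ∈ G, ¬ IsOpen ({y} : Set X)) {x : X} (hx : x ∈ G) :
    x ∈ bigLimitPoints I := by
  set S := {y : X | ¬ IsOpen ({y} : Set X)} \ {x}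
  have hSG : Sᶜ ∩ G = {x} := by
    refine Set.Subset.antisymm ?_ (by simpa [S] using hx)
    rintro y ⟨hyS, hyG⟩
    by_contra hyx
    exact hyS ⟨hG y hyG, hyx⟩
  have hS : IsClosed S := (hlim.subset Set.sdiff_subset).isClosed
  refine ⟨hG x hx, fun hxI => hbig Sᶜ hS.isOpen_compl (hSG ▸ Set.singleton_nonempty x)
    ⟨_, hxI, by simp [hSG]⟩⟩

lemma exists_nonemptyCompacts_eq_insert {A : Set X} (hA : A.Finite) (x : X) :
    ∃ K : NonemptyCompacts X, (K : Set X) = insert x A :=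
  ⟨⟨⟨insert x A, (hA.insert x).isCompact⟩, Set.insert_nonempty x A⟩, rfl⟩

end

theorem stmt_16_general
    (I : Set (NonemptyCompacts E))
    (hlim : {x : E | ¬ IsOpen ({x} : Set E)}.Finite) :
    ∃ F : Set (NonemptyCompacts E), IsCompact F ∧
      (∀ K ∈ F, ∀ L : NonemptyCompacts E, (K : Set E) ⊆ (L : Set E) → L ∈ F) ∧
      ∀ G : Set E, IsGδ G → G.Nonempty →
        (∀ U : Set E, IsOpen U → (U ∩ G).Nonempty →
          ¬ ∃ K ∈ I, (K : Set E) = closure (U ∩ G)) →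
        ¬ MeagerIn (star G) F := by
  set A := bigLimitPoints I
  set F := {K : NonemptyCompacts E | A ⊆ K}
  have hF : IsCompact F := (NonemptyCompacts.isClosed_setOf_superset A).isCompact
  have : CompactSpace F := isCompact_iff_compactSpace.mp hF
  refine ⟨F, hF, fun K hK L hKL => hK.trans hKL, fun G _ ⟨x₀, hx₀⟩ hbig => ?_⟩
  obtain ⟨x, hxG, hx⟩ : ∃ x ∈ G, IsOpen ({x} : Set E) ∨ x ∈ A := by
    by_contra! h
    exact (h x₀ hx₀).2
      (mem_bigLimitPoints_of_everywhereBig hlim hbig (fun y hy => (h y hy).1) hx₀)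
  obtain ⟨K, hK⟩ := exists_nonemptyCompacts_eq_insert (A := A) (hlim.subset fun y hy => hy.1) x
  have hKx : K ∈ star ({x} : Set E) := ⟨x, by simp [hK]⟩
  have hKF : K ∈ F := by simp only [F, Set.mem_ofPred_eq, hK, Set.subset_insert]
  rcases hx with hx | hxA
  · exact not_meagerIn_of_isOpen (isOpen_star hx) ⟨K, hKx, hKF⟩
      fun L ⟨⟨y, hyL, hyx⟩, _⟩ => ⟨y, hyL, hyx ▸ hxG⟩
  · exact not_meagerIn_of_isOpen isOpen_univ ⟨K, trivial, hKF⟩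
      fun L ⟨_, hLF⟩ => ⟨x, hLF hxA, hxG⟩

/-- If `E` is a compact Polish space with only finitely many limit points and
`I` is a G_δ σ-ideal of compact sets with property (*) containing only meager sets, then
there is a compact upward closed `F ⊆ K(E)` such that `G*` is nonmeager in `F` for every
nonempty G_δ set `G` that is everywhere big with respect to `I`. -/
theorem stmt_16
    (I : Set (NonemptyCompacts E)) (hIne : I.Nonempty)
    (hIdown : ∀ K ∈ I, ∀ L : NonemptyCompacts E, (L : Set E) ⊆ (K : Set E) → L ∈ I)
    (hIunion : ∀ K ∈ I, ∀ L ∈ I, K ⊔ L ∈ I)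
    (hIsigma : ∀ f : ℕ → NonemptyCompacts E, (∀ n, f n ∈ I) →
      ∀ K : NonemptyCompacts E, (K : Set E) = ⋃ n, ((f n : Set E)) → K ∈ I)
    (hIGδ : IsGδ (I : Set (NonemptyCompacts E)))
    (hIstar : ∀ f : ℕ → NonemptyCompacts E, (∀ n, f n ∈ I) →
      ∃ G : Set E, IsGδ G ∧ (⋃ n, ((f n : Set E))) ⊆ G ∧
        ∀ K : NonemptyCompacts E, (K : Set E) ⊆ G → K ∈ I)
    (hImeager : ∀ K ∈ I, IsMeagre ((K : NonemptyCompacts E) : Set E))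
    (hlim : {x : E | ¬ IsOpen ({x} : Set E)}.Finite) :
    ∃ F : Set (NonemptyCompacts E), IsCompact F ∧
      (∀ K ∈ F, ∀ L : NonemptyCompacts E, (K : Set E) ⊆ (L : Set E) → L ∈ F) ∧
      ∀ G : Set E, IsGδ G → G.Nonempty →
        (∀ U : Set E, IsOpen U → (U ∩ G).Nonempty →
          ¬ ∃ K ∈ I, (K : Set E) = closure (U ∩ G)) →
        ¬ MeagerIn (star G) F :=
  stmt_16_general I hlim
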